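/- For any vector (finite sequence) K of natural numbers of length 3, the polynomial C̃_K(q,t) over Łukasiewicz paths with profile K is symmetric in q and t, i.e., C̃_K(q,t) = C̃_K(t,q). -/
import Mathlib


/-! ## Plane trees -/

/-- A plane tree: a root together with an ordered (left-to-right) list of subtrees.
A node is a *leaf* if it has no children, and *internal* otherwise. -/
inductive PTree : Type where
  | node : List PTree → PTree


namespace Luka

/-! ## Łukasiewicz paths

A path is encoded by its list of step increments: the step `(1,k)` (an up-step `U_k` of
degree `k`) is encoded by `k : ℤ` with `k ≥ 0`, and the down step `D = (1,-1)` by `-1`. -/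

/-- `P` is a Łukasiewicz path: it is nonempty, uses steps `(1,k)` with `k ≥ -1`,
stays (weakly) above the `x`-axis before its last step, and ends at height `-1`
(so that it goes strictly below the axis only at the last step, which is forced
to be the down-step `D`). -/
def IsLukas (P : List ℤ) : Prop :=
  P ≠ [] ∧ (∀ s ∈ P, -1 ≤ s) ∧ (∀ n, n < P.length → 0 ≤ (P.take n).sum) ∧ P.sum = -1

/-- The degrees of the up-steps of `P`, from left to right (the *profile* of `P`). -/
def upDegs (P : List ℤ) : List ℕ := (P.filter (fun s => 0 ≤ s)).map Int.toNat

/-- The profile multiset `𝔐(P)`: the multiset of degrees of the up-steps of `P`. -/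
def profileM (P : List ℤ) : Multiset ℕ := (upDegs P : Multiset ℕ)

/-- The degree of the first up-step of `P`, if any. -/
def firstUp? (P : List ℤ) : Option ℕ := (upDegs P).head?

/-- The degree of the last up-step of `P`, if any. -/
def lastUp? (P : List ℤ) : Option ℕ := (upDegs P).getLast?

/-- Auxiliary: starting from height `h`, record the starting height of every up-step. -/
def areaVecAux : ℤ → List ℤ → List ℤ
  | _, [] => []
  | h, s :: rest => (if 0 ≤ s then [h] else []) ++ areaVecAux (h + s) rest

/-- The area vector `Area(P)`: the `i`-th entry is the `y`-coordinate of the starting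
point of the `i`-th up-step of `P`. -/
def areaVec (P : List ℤ) : List ℤ := areaVecAux 0 P

/-- `area(P)`: the sum of the entries of the area vector (entries of a Łukasiewicz
path are nonnegative, so taking `Int.toNat` entrywise is harmless). -/
def area (P : List ℤ) : ℕ := ((areaVec P).map Int.toNat).sum

/-- Auxiliary computation of the depth values: `cur` is the depth value of the previous
step (`0` initially), and `stack` holds the pending depth values of the future matching
down-steps (top of the stack = value for the next matching down-step to come).
Reading an up-step `U_k` whose value is `cur` (inherited from the previous step) pushes
the values `cur+1, …, cur+k` for its `k` matching down-steps (its first matching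
down-step, which crosses its topmost interior level, gets `cur+1`, etc.); reading a
down-step pops its value.  The list returned records the value `d_i` of each up-step,
from left to right. -/
def depthVecAux : ℕ → List ℕ → List ℤ → List ℕ
  | _, _, [] => []
  | cur, stack, s :: rest =>
    if 0 ≤ s then
      cur :: depthVecAux cur ((List.range s.toNat).map (fun i => cur + i + 1) ++ stack) rest
    else
      match stack with
      | [] => depthVecAux cur [] rest
      | v :: st => depthVecAux v st rest

/-- The depth vector `Depth(P)`: the values `d_i` at the up-steps of `P`, left to right. -/
def depthVec (P : List ℤ) : List ℕ := depthVecAux 0 [] P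

/-- `depth(P)`: the sum of the entries of the depth vector. -/
def depth (P : List ℤ) : ℕ := (depthVec P).sum

/-- `P ∈ 𝓛_M`. -/
def MemL (M : Multiset ℕ) (P : List ℤ) : Prop := IsLukas P ∧ profileM P = M

/-- `P ∈ 𝓛_{a,M}`: first up-step of degree `a`, profile multiset `M ⊎ {a}`. -/
def MemLa (a : ℕ) (M : Multiset ℕ) (P : List ℤ) : Prop :=
  IsLukas P ∧ firstUp? P = some a ∧ profileM P = a ::ₘ M

/-- `P ∈ 𝓛_{M,b}`: last up-step of degree `b`, profile multiset `M ⊎ {b}`. -/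
def MemLb (M : Multiset ℕ) (b : ℕ) (P : List ℤ) : Prop :=
  IsLukas P ∧ lastUp? P = some b ∧ profileM P = b ::ₘ M

/-- `P ∈ 𝓛_{a,M,b}`: first up-step of degree `a`, last up-step of degree `b`,
profile multiset `M ⊎ {a, b}`. -/
def MemLab (a : ℕ) (M : Multiset ℕ) (b : ℕ) (P : List ℤ) : Prop :=
  IsLukas P ∧ firstUp? P = some a ∧ lastUp? P = some b ∧ profileM P = a ::ₘ b ::ₘ M

/-! ## Plane-tree statistics -/

/-- The (ordered) children of the root of a plane tree. -/
def children : PTree → List PTree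
  | .node ts => ts

/-- The degree of (the root of) a plane tree: its number of children. -/
def numChildren (t : PTree) : ℕ := (children t).length

mutual
/-- Number of internal nodes of a plane tree. -/
def internCount : PTree → ℕ
  | .node [] => 0
  | .node (t :: ts) => 1 + internCountL (t :: ts)
def internCountL : List PTree → ℕ
  | [] => 0
  | t :: ts => internCount t + internCountL ts
end

mutual
/-- `lthornT T` = the sum of `lthorn(u)` over all internal nodes `u` of `T`, where
`lthorn(u)` is the number of descending edges of strict ancestors `v` of `u` lying to
the left of the path from `v` to `u`.  (Every internal node of the subtree rooted at
the `i`-th child (0-indexed) of a node gains `i` left thorns from that node.) -/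
def lthornT : PTree → ℕ
  | .node ts => lthornL 0 ts
def lthornL : ℕ → List PTree → ℕ
  | _, [] => 0
  | i, t :: ts => lthornT t + i * internCount t + lthornL (i + 1) ts
end

mutual
/-- `rthornT T` = the sum of `rthorn(u)` over all internal nodes `u` of `T`, where
`rthorn(u)` is the number of descending edges of strict ancestors `v` of `u` lying to
the right of the path from `v` to `u`. -/
def rthornT : PTree → ℕ
  | .node ts => rthornL ts
def rthornL : List PTree → ℕ
  | [] => 0
  | t :: ts => rthornT t + ts.length * internCount t + rthornL ts
end

mutual
/-- The list of the values `lthorn(u)` for the internal nodes `u` of `T`, in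
contour-walk (preorder) order. -/
def lthornList : PTree → List ℕ
  | .node [] => []
  | .node (t :: ts) => 0 :: lthornLL 0 (t :: ts)
def lthornLL : ℕ → List PTree → List ℕ
  | _, [] => []
  | i, t :: ts => (lthornList t).map (· + i) ++ lthornLL (i + 1) ts
end

mutual
/-- The list of the values `rthorn(u)` for the internal nodes `u` of `T`, in
contour-walk (preorder) order. -/
def rthornList : PTree → List ℕ
  | .node [] => []
  | .node (t :: ts) => 0 :: rthornLL (t :: ts)
def rthornLL : List PTree → List ℕ
  | [] => []
  | t :: ts => (rthornList t).map (· + ts.length) ++ rthornLL ts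
end

/-! ## The bijections `λ` and `τ` -/

mutual
/-- `λ`: record each node of the tree at its first visit in the left-to-right contour
walk: `U_k` (i.e. `k`) for an internal node with `k+1` children, `D` (i.e. `-1`)
for a leaf. -/
def lambdaT : PTree → List ℤ
  | .node ts => ((ts.length : ℤ) - 1) :: lambdaL ts
def lambdaL : List PTree → List ℤ
  | [] => []
  | t :: ts => lambdaT t ++ lambdaL ts
end

/-- Auxiliary for `τ`: reading the path from right to left, maintain the stack of the
already-built subtrees (in left-to-right order); a down-step `D` creates a leaf and an
up-step `U_k` grabs the `k+1` topmost subtrees as its children.  This builds the same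
tree as the left-to-right "leftmost bud" construction. -/
def tauStack (P : List ℤ) : List PTree :=
  P.foldr (fun s st =>
    if s < 0 then PTree.node [] :: st
    else PTree.node (st.take (s.toNat + 1)) :: st.drop (s.toNat + 1)) []

/-- `τ`: the plane tree associated with a Łukasiewicz path. -/
def tau (P : List ℤ) : PTree := (tauStack P).headD (.node [])

mutual
/-- The mirror of a plane tree: reverse the left-to-right order of the children of
every internal node. -/
def mir : PTree → PTree
  | .node ts => .node (mirL ts).reverse
def mirL : List PTree → List PTree
  | [] => []
  | t :: ts => mir t :: mirL ts
end

mutual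
/-- The subtrees rooted at the internal nodes of `T`, in contour-walk (preorder)
order. -/
def internalSubtrees : PTree → List PTree
  | .node [] => []
  | .node (t :: ts) => .node (t :: ts) :: internalSubtreesL (t :: ts)
def internalSubtreesL : List PTree → List PTree
  | [] => []
  | t :: ts => internalSubtrees t ++ internalSubtreesL ts
end

/-- The multiset of degrees of the non-root internal nodes of `T`. -/
def nonRootInternalDegs (T : PTree) : Multiset ℕ :=
  (((internalSubtreesL (children T)).map numChildren : List ℕ) : Multiset ℕ)

/-! ## Lodestars and the lodestar swap -/

/-- A node is a lodestar-type node if it is internal and all its children are leaves. -/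
def isLodestarNode (t : PTree) : Bool :=
  !(children t).isEmpty && (children t).all (fun c => (children c).isEmpty)

mutual
/-- The subtree rooted at the *left lodestar* of `T`: the first internal node, in
contour-walk (preorder) order, all of whose children are leaves (if it exists). -/
def leftLode? : PTree → Option PTree
  | .node ts =>
    if isLodestarNode (.node ts) then some (.node ts) else leftLodeL? ts
def leftLodeL? : List PTree → Option PTree
  | [] => none
  | t :: ts =>
    match leftLode? t with
    | some r => some r
    | none => leftLodeL? ts
end

mutual
/-- The subtree rooted at the *right lodestar* of `T`: the last internal node, in
contour-walk (preorder) order, all of whose children are leaves (if it exists). -/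
def rightLode? : PTree → Option PTree
  | .node ts =>
    match rightLodeL? ts with
    | some r => some r
    | none => if isLodestarNode (.node ts) then some (.node ts) else none
def rightLodeL? : List PTree → Option PTree
  | [] => none
  | t :: ts =>
    match rightLodeL? ts with
    | some r => some r
    | none => rightLode? t
end

mutual
/-- Replace the left lodestar of `T` (first preorder all-leaf-children internal node)
by the tree `r`; `none` if `T` has no internal node. -/
def replF : PTree → PTree → Option PTree
  | r, .node ts =>
    if isLodestarNode (.node ts) then some r
    else (replFL r ts).map PTree.node
def replFL : PTree → List PTree → Option (List PTree)
  | _, [] => none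
  | r, t :: ts =>
    match replF r t with
    | some t' => some (t' :: ts)
    | none => (replFL r ts).map (t :: ·)
end

mutual
/-- Replace the right lodestar of `T` (last preorder all-leaf-children internal node)
by the tree `r`; `none` if `T` has no internal node. -/
def replL : PTree → PTree → Option PTree
  | r, .node ts =>
    match replLL r ts with
    | some ts' => some (.node ts')
    | none => if isLodestarNode (.node ts) then some r else none
def replLL : PTree → List PTree → Option (List PTree)
  | _, [] => none
  | r, t :: ts =>
    match replLL r ts with
    | some ts' => some (t :: ts')
    | none => (replL r t).map (· :: ts)
end

/-- The lodestar swap: exchange the subtrees rooted at the left lodestar and the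
right lodestar of `T` (each a node together with its pendant leaves). -/
def lodeSwap (T : PTree) : PTree :=
  match leftLode? T, rightLode? T with
  | some L, some R => ((replF R T).bind (replL L)).getD T
  | _, _ => T

end Luka

namespace LukaAux
open Luka

def rep (n : ℕ) : List ℤ := List.replicate n (-1)

def pathOf (a b c i j : ℕ) : List ℤ :=
  (a : ℤ) :: (rep i ++ ((b : ℤ) :: (rep j ++ ((c : ℤ) :: rep (a + b + c + 1 - i - j)))))

lemma rep_sum (n : ℕ) : (rep n).sum = -n := by simp [rep]

lemma rep_length (n : ℕ) : (rep n).length = n := by simp [rep]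

lemma mem_rep {s : ℤ} {n : ℕ} (h : s ∈ rep n) : s = -1 := List.eq_of_mem_replicate h

lemma take_rep_sum (m s : ℕ) : ((rep m).take s).sum = -(min s m : ℕ) := by
  simp [rep, List.take_replicate]

lemma take_cons_rep_sum (x : ℤ) (k : ℕ) (L : List ℤ) (n : ℕ) :
    ((x :: (rep k ++ L)).take (n+1)).sum = x - (min n k : ℕ) + (L.take (n-k)).sum := by
  rw [List.take_succ_cons, List.take_append, rep_length]
  simp [rep, List.take_replicate]
  ring

lemma upDegs_pathOf (a b c i j : ℕ) : upDegs (pathOf a b c i j) = [a, b, c] := by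
  simp [upDegs, pathOf, rep, List.filter_append]


lemma pathOf_length (a b c i j : ℕ) :
    (pathOf a b c i j).length = i + j + (a + b + c + 1 - i - j) + 3 := by
  simp [pathOf, rep]; omega

lemma isLukas_pathOf {a b c i j : ℕ} (hi : i ≤ a) (hij : i + j ≤ a + b) :
    IsLukas (pathOf a b c i j) := by
  set m := a + b + c + 1 - i - j with hm
  refine ⟨by simp [pathOf], ?_, ?_, ?_⟩
  · intro s hs
    simp [pathOf, rep] at hs
    rcases hs with h | h | h | h | h | h <;> omega
  · intro n hn
    rw [pathOf_length] at hn
    match n with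
    | 0 => simp
    | (n+1) =>
      rw [show pathOf a b c i j =
        (a:ℤ) :: (rep i ++ ((b:ℤ) :: (rep j ++ ((c:ℤ) :: rep m)))) from rfl,
        take_cons_rep_sum]
      rcases Nat.eq_zero_or_eq_succ_pred (n - i) with h1 | h1
      · rw [h1]; simp; omega
      · rw [h1, take_cons_rep_sum]
        rcases Nat.eq_zero_or_eq_succ_pred ((n - i).pred - j) with h2 | h2
        · rw [h2]; simp; omega
        · rw [h2, List.take_succ_cons, List.sum_cons, take_rep_sum]
          omega
  · rw [show pathOf a b c i j =
        (a:ℤ) :: (rep i ++ ((b:ℤ) :: (rep j ++ ((c:ℤ) :: rep m)))) from rfl]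
    simp [rep_sum]
    omega

lemma areaVecAux_append (h : ℤ) (L1 L2 : List ℤ) :
    areaVecAux h (L1 ++ L2) = areaVecAux h L1 ++ areaVecAux (h + L1.sum) L2 := by
  induction L1 generalizing h with
  | nil => simp [areaVecAux]
  | cons s l ih => simp [areaVecAux, ih, add_assoc]

lemma areaVecAux_rep (h : ℤ) (k : ℕ) : areaVecAux h (rep k) = [] := by
  induction k generalizing h with
  | zero => simp [rep, areaVecAux]
  | succ n ih => simp [rep, List.replicate_succ, areaVecAux] at *; exact ih _

lemma areaVecAux_cons (h x : ℤ) (hx : 0 ≤ x) (L : List ℤ) :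
    areaVecAux h (x :: L) = h :: areaVecAux (h + x) L := by
  simp [areaVecAux, hx]

lemma area_pathOf {a b c i j : ℕ} (hi : i ≤ a) (hij : i + j ≤ a + b) :
    area (pathOf a b c i j) = 2 * a + b - 2 * i - j := by
  have h1 : areaVec (pathOf a b c i j)
      = [0, (a:ℤ) - i, (a:ℤ) + b - i - j] := by
    rw [show pathOf a b c i j =
      (a:ℤ) :: (rep i ++ ((b:ℤ) :: (rep j ++ ((c:ℤ) :: rep (a+b+c+1-i-j))))) from rfl]
    rw [areaVec, areaVecAux_cons _ _ (by positivity), areaVecAux_append, areaVecAux_rep,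
      rep_sum, areaVecAux_cons _ _ (by positivity), areaVecAux_append, areaVecAux_rep,
      rep_sum, areaVecAux_cons _ _ (by positivity), areaVecAux_rep]
    norm_num
    constructor <;> ring
  rw [area, h1]
  simp
  omega

lemma depthVecAux_cons (cur : ℕ) (st : List ℕ) (s : ℤ) (rest : List ℤ) :
    depthVecAux cur st (s :: rest) = if 0 ≤ s then
      cur :: depthVecAux cur ((List.range s.toNat).map (fun i => cur + i + 1) ++ st) rest
    else
      match st with
      | [] => depthVecAux cur [] rest
      | v :: st' => depthVecAux v st' rest := rfl

lemma depthVecAux_neg {L : List ℤ} (h : ∀ s ∈ L, s < 0) :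
    ∀ (cur : ℕ) (st : List ℕ), depthVecAux cur st L = [] := by
  induction L with
  | nil => intro cur st; rfl
  | cons s l ih =>
    intro cur st
    have hs : ¬ (0 ≤ s) := by simpa using h s (by simp)
    have h' : ∀ x ∈ l, x < 0 := fun x hx => h x (by simp [hx])
    cases st with
    | nil => rw [depthVecAux_cons, if_neg hs]; exact ih h' _ _
    | cons v st' => rw [depthVecAux_cons, if_neg hs]; exact ih h' _ _

lemma depthVecAux_up (cur : ℕ) (st : List ℕ) (n : ℕ) (L : List ℤ) :
    depthVecAux cur st ((n : ℤ) :: L)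
      = cur :: depthVecAux cur ((List.range n).map (fun i => cur + i + 1) ++ st) L := by
  rw [depthVecAux_cons, if_pos (Int.natCast_nonneg n)]
  simp

lemma depthVecAux_pop (k : ℕ) : ∀ (cur : ℕ) (st : List ℕ) (L : List ℤ), k ≤ st.length →
    depthVecAux cur st (rep k ++ L)
      = depthVecAux (if k = 0 then cur else st.getD (k-1) 0) (st.drop k) L := by
  induction k with
  | zero => intro cur st L _; simp [rep]
  | succ k ih =>
    intro cur st L hk
    cases st with
    | nil => simp at hk
    | cons v st' =>
      rw [show rep (k+1) ++ L = (-1) :: (rep k ++ L) by simp [rep, List.replicate_succ]]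
      rw [depthVecAux_cons, if_neg (by norm_num)]
      show depthVecAux v st' (rep k ++ L) = _
      rw [ih v st' L (by simpa using hk)]
      cases k with
      | zero => simp
      | succ k => simp

lemma depth_pathOf {a b c i j : ℕ} (hi : i ≤ a) (hij : i + j ≤ a + b) :
    depth (pathOf a b c i j) = i + (if j ≤ b then i + j else i + j - b) := by
  set m := a + b + c + 1 - i - j with hm
  have step1 : depthVec (pathOf a b c i j)
      = 0 :: depthVecAux 0 ((List.range a).map (fun x => 0 + x + 1))
          (rep i ++ ((b:ℤ) :: (rep j ++ ((c:ℤ) :: rep m)))) := by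
    rw [depthVec, show pathOf a b c i j =
      (a:ℤ) :: (rep i ++ ((b:ℤ) :: (rep j ++ ((c:ℤ) :: rep m)))) from rfl,
      depthVecAux_up]
    simp
  rw [depth, step1, depthVecAux_pop i 0 _ _ (by simp; omega)]
  have hcur2 : (if i = 0 then 0
      else (((List.range a).map (fun x => 0 + x + 1)).getD (i-1) 0)) = i := by
    rcases Nat.eq_zero_or_pos i with h | h
    · simp [h]
    · rw [if_neg (by omega), List.getD_eq_getElem _ _ (by simp; omega)]
      simp
      omega
  rw [hcur2, depthVecAux_up, depthVecAux_pop j i _ _ (by simp; omega)]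
  have hdroplen : (((List.range a).map (fun x => 0 + x + 1)).drop i).length = a - i := by simp
  have hcur3 : (if j = 0 then i
      else (((List.range b).map (fun x => i + x + 1)
          ++ ((List.range a).map (fun x => 0 + x + 1)).drop i).getD (j-1) 0))
      = if j ≤ b then i + j else i + j - b := by
    rcases Nat.eq_zero_or_pos j with h | h
    · simp [h]
    · rw [if_neg (by omega)]
      rcases le_or_gt j b with hjb | hjb
      · rw [if_pos hjb, List.getD_append _ _ _ _ (by simp; omega),
          List.getD_eq_getElem _ _ (by simp; omega)]
        simp
        omega
      · rw [if_neg (by omega), List.getD_append_right _ _ _ _ (by simp; omega),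
          List.getD_eq_getElem _ _ (by simp; omega)]
        simp
        omega
  rw [hcur3, depthVecAux_up,
    depthVecAux_neg (fun s hs => by have := mem_rep hs; omega)]
  rcases le_or_gt j b with hjb | hjb <;> simp [hjb]

lemma decomp_cons : ∀ (P : List ℤ), (∀ s ∈ P, -1 ≤ s) → ∀ (x : ℤ) (L : List ℤ),
    P.filter (fun s => decide (0 ≤ s)) = x :: L →
    ∃ k Q, P = rep k ++ x :: Q ∧ (∀ s ∈ Q, -1 ≤ s) ∧ Q.filter (fun s => decide (0 ≤ s)) = L := by
  intro P
  induction P with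
  | nil => intro _ x L h; simp at h
  | cons s P' ih =>
    intro hmem x L h
    rcases le_or_gt 0 s with hs | hs
    · rw [List.filter_cons_of_pos (by simpa using hs)] at h
      obtain ⟨rfl, rfl⟩ : s = x ∧ P'.filter (fun s => decide (0 ≤ s)) = L := by
        constructor <;> [exact (List.cons.injEq .. ▸ h).1; exact (List.cons.injEq .. ▸ h).2]
      exact ⟨0, P', by simp [rep], fun u hu => hmem u (by simp [hu]), rfl⟩
    · have hs1 : s = -1 := by have := hmem s (by simp); omega
      rw [List.filter_cons_of_neg (by simpa using hs)] at h
      obtain ⟨k, Q, hP, hQ1, hQ2⟩ := ih (fun u hu => hmem u (by simp [hu])) x L h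
      refine ⟨k + 1, Q, ?_, hQ1, hQ2⟩
      rw [hs1, hP, show rep (k+1) = (-1 : ℤ) :: rep k by simp [rep, List.replicate_succ]]
      rfl

lemma decomp_nil : ∀ (P : List ℤ), (∀ s ∈ P, -1 ≤ s) →
    P.filter (fun s => decide (0 ≤ s)) = [] → P = rep P.length := by
  intro P
  induction P with
  | nil => intro _ _; simp [rep]
  | cons s P' ih =>
    intro hmem h
    rcases le_or_gt 0 s with hs | hs
    · rw [List.filter_cons_of_pos (by simpa using hs)] at h; simp at h
    · have hs1 : s = -1 := by have := hmem s (by simp); omega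
      rw [List.filter_cons_of_neg (by simpa using hs)] at h
      have := ih (fun u hu => hmem u (by simp [hu])) h
      simp [rep, List.replicate_succ, hs1]
      exact this

lemma mem_iff (a b c : ℕ) (P : List ℤ) :
    (IsLukas P ∧ upDegs P = [a, b, c]) ↔
      ∃ i j, i ≤ a ∧ i + j ≤ a + b ∧ P = pathOf a b c i j := by
  constructor
  · rintro ⟨hP, hdeg⟩
    obtain ⟨hne, hmem, hpre, hsum⟩ := hP
    -- the filtered list is [a, b, c] as integers
    have hfil : P.filter (fun s => decide (0 ≤ s)) = [(a:ℤ), b, c] := by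
      have hmem' : ∀ s ∈ P.filter (fun s => decide (0 ≤ s)), 0 ≤ s := by
        intro s hs; simpa using (List.mem_filter.1 hs).2
      rw [upDegs] at hdeg
      obtain ⟨x, y, z, hxyz⟩ := List.length_eq_three.1 (by
        have := congrArg List.length hdeg; simpa using this)
      rw [hxyz] at hdeg hmem' ⊢
      simp at hdeg
      have hx := hmem' x (by simp)
      have hy := hmem' y (by simp)
      have hz := hmem' z (by simp)
      obtain ⟨h1, h2, h3⟩ := hdeg
      have hxa : x = (a : ℤ) := by omega
      have hyb : y = (b : ℤ) := by omega
      have hzc : z = (c : ℤ) := by omega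
      rw [hxa, hyb, hzc]
    obtain ⟨k0, Q1, hP1, hQ1mem, hQ1⟩ := decomp_cons P hmem _ _ hfil
    obtain ⟨i, Q2, hP2, hQ2mem, hQ2⟩ := decomp_cons Q1 hQ1mem _ _ hQ1
    obtain ⟨j, Q3, hP3, hQ3mem, hQ3⟩ := decomp_cons Q2 hQ2mem _ _ hQ2
    have hP4 := decomp_nil Q3 hQ3mem hQ3
    set m := Q3.length with hmQ
    rw [hP4] at hP3
    rw [hP3] at hP2
    rw [hP2] at hP1
    -- now P = rep k0 ++ a :: rep i ++ b :: rep j ++ c :: rep m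
    have hlen : P.length = k0 + i + j + m + 3 := by
      rw [hP1]; simp [rep]; omega
    -- k0 = 0
    have hk0 : k0 = 0 := by
      by_contra hk
      obtain ⟨k0', rfl⟩ := Nat.exists_eq_succ_of_ne_zero hk
      have h1 := hpre 1 (by omega)
      rw [hP1] at h1
      rw [show rep (k0' + 1) = (-1 : ℤ) :: rep k0' by simp [rep, List.replicate_succ]] at h1
      simp at h1
    rw [hk0] at hP1 hlen
    rw [show rep 0 = ([] : List ℤ) from rfl] at hP1
    rw [List.nil_append] at hP1
    -- i ≤ a
    have hia : i ≤ a := by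
      have h1 := hpre (i + 1) (by omega)
      rw [hP1, take_cons_rep_sum] at h1
      simp at h1
      omega
    -- i + j ≤ a + b
    have hijab : i + j ≤ a + b := by
      have h1 := hpre (i + j + 2) (by omega)
      rw [hP1, take_cons_rep_sum] at h1
      rw [show i + j + 1 - i = j + 1 by omega, take_cons_rep_sum] at h1
      simp at h1
      omega
    -- m = a + b + c + 1 - i - j
    have hmval : m = a + b + c + 1 - i - j := by
      rw [hP1] at hsum
      simp [rep_sum] at hsum
      omega
    exact ⟨i, j, hia, hijab, by rw [hP1, hmval]; rfl⟩
  · rintro ⟨i, j, hi, hij, rfl⟩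
    exact ⟨isLukas_pathOf hi hij, upDegs_pathOf a b c i j⟩

lemma rep_append_cons_inj : ∀ (i : ℕ) {i' : ℕ} {x x' : ℤ} {X X' : List ℤ}, 0 ≤ x → 0 ≤ x' →
    rep i ++ x :: X = rep i' ++ x' :: X' → i = i' ∧ x = x' ∧ X = X' := by
  intro i
  induction i with
  | zero =>
    intro i' x x' X X' hx hx' h
    cases i' with
    | zero => simpa [rep] using h
    | succ n =>
      rw [show rep (n+1) = (-1 : ℤ) :: rep n by simp [rep, List.replicate_succ]] at h
      simp [rep] at h
      omega
  | succ n ih =>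
    intro i' x x' X X' hx hx' h
    cases i' with
    | zero =>
      rw [show rep (n+1) = (-1 : ℤ) :: rep n by simp [rep, List.replicate_succ]] at h
      simp [rep] at h
      omega
    | succ n' =>
      rw [show rep (n+1) = (-1 : ℤ) :: rep n by simp [rep, List.replicate_succ],
        show rep (n'+1) = (-1 : ℤ) :: rep n' by simp [rep, List.replicate_succ]] at h
      have h2 := (List.cons.injEq .. ▸ h).2
      obtain ⟨h1, h3, h4⟩ := ih hx hx' h2
      exact ⟨by omega, h3, h4⟩

lemma pathOf_inj {a b c i j i' j' : ℕ} (h : pathOf a b c i j = pathOf a b c i' j') :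
    i = i' ∧ j = j' := by
  rw [pathOf, pathOf] at h
  have h1 := (List.cons.injEq .. ▸ h).2
  obtain ⟨hi, -, h2⟩ := rep_append_cons_inj i (by positivity) (by positivity) h1
  obtain ⟨hj, -, -⟩ := rep_append_cons_inj j (by positivity) (by positivity) h2
  exact ⟨hi, hj⟩

end LukaAux

open LukaAux

open Luka in
/-- **Proposition 4.6 (2).**  For any finite sequence `K` of naturals of length `3`,
the polynomial `C̃_K(q,t)` over Łukasiewicz paths with profile sequence `K` is
symmetric in `q, t`.  The finite set of Łukasiewicz paths with profile sequence `K`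
is presented as an arbitrary `Finset S` with exactly those members. -/
theorem tildeC_profile_length_three_qt_symm (K : List ℕ) (hK : K.length = 3)
    {R : Type*} [CommSemiring R] (q t : R) (S : Finset (List ℤ))
    (hS : ∀ P, P ∈ S ↔ IsLukas P ∧ upDegs P = K) :
    ∑ P ∈ S, q ^ area P * t ^ depth P = ∑ P ∈ S, t ^ area P * q ^ depth P := by
  classical
  obtain ⟨a, b, c, rfl⟩ := List.length_eq_three.1 hK
  set T : Finset (ℕ × ℕ) := (Finset.range (a+1) ×ˢ Finset.range (a+b+1)).filter
      (fun p => p.1 + p.2 ≤ a + b) with hT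
  have hmemT : ∀ p : ℕ × ℕ, p ∈ T ↔ p.1 ≤ a ∧ p.1 + p.2 ≤ a + b := by
    intro p
    simp only [hT, Finset.mem_filter, Finset.mem_product, Finset.mem_range, Nat.lt_succ_iff]
    omega
  have hST : S = T.image (fun p => pathOf a b c p.1 p.2) := by
    ext P
    rw [hS, mem_iff, Finset.mem_image]
    constructor
    · rintro ⟨i, j, hi, hij, rfl⟩
      exact ⟨(i, j), (hmemT _).2 ⟨hi, hij⟩, rfl⟩
    · rintro ⟨p, hp, rfl⟩
      obtain ⟨h1, h2⟩ := (hmemT p).1 hp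
      exact ⟨p.1, p.2, h1, h2, rfl⟩
  have hinj : ∀ p ∈ T, ∀ q ∈ T, pathOf a b c p.1 p.2 = pathOf a b c q.1 q.2 → p = q := by
    intro p _ r _ h
    obtain ⟨h1, h2⟩ := pathOf_inj h
    exact Prod.ext h1 h2
  rw [hST, Finset.sum_image hinj, Finset.sum_image hinj]
  set A : ℕ × ℕ → ℕ := fun p => 2*a + b - 2*p.1 - p.2 with hA
  set D : ℕ × ℕ → ℕ := fun p => p.1 + (if p.2 ≤ b then p.1 + p.2 else p.1 + p.2 - b) with hD
  have hAD : ∀ p ∈ T, area (pathOf a b c p.1 p.2) = A p ∧ depth (pathOf a b c p.1 p.2) = D p := by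
    intro p hp
    obtain ⟨h1, h2⟩ := (hmemT p).1 hp
    exact ⟨area_pathOf h1 h2, depth_pathOf h1 h2⟩
  calc ∑ p ∈ T, q ^ area (pathOf a b c p.1 p.2) * t ^ depth (pathOf a b c p.1 p.2)
      = ∑ p ∈ T, q ^ A p * t ^ D p :=
        Finset.sum_congr rfl (fun p hp => by rw [(hAD p hp).1, (hAD p hp).2])
    _ = ∑ p ∈ T, t ^ A p * q ^ D p := ?_
    _ = ∑ p ∈ T, t ^ area (pathOf a b c p.1 p.2) * q ^ depth (pathOf a b c p.1 p.2) :=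
        Finset.sum_congr rfl (fun p hp => by rw [(hAD p hp).1, (hAD p hp).2])
  set σ : ℕ × ℕ → ℕ × ℕ :=
    fun p => if p.2 ≤ b then (a - p.1, b - p.2) else (a - p.1 - (p.2 - b), p.2) with hσ
  have hσ1 : ∀ p : ℕ × ℕ, ((σ p).1 = if p.2 ≤ b then a - p.1 else a - p.1 - (p.2 - b)) ∧
      ((σ p).2 = if p.2 ≤ b then b - p.2 else p.2) := by
    intro p
    by_cases h : p.2 ≤ b <;> simp [hσ, h]
  apply Finset.sum_nbij' (i := σ) (j := σ)
  · intro p hp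
    obtain ⟨h1, h2⟩ := (hmemT p).1 hp
    refine (hmemT _).2 ?_
    obtain ⟨e1, e2⟩ := hσ1 p
    constructor <;> split_ifs at e1 e2 ⊢ <;> omega
  · intro p hp
    obtain ⟨h1, h2⟩ := (hmemT p).1 hp
    refine (hmemT _).2 ?_
    obtain ⟨e1, e2⟩ := hσ1 p
    constructor <;> split_ifs at e1 e2 ⊢ <;> omega
  · intro p hp
    obtain ⟨h1, h2⟩ := (hmemT p).1 hp
    obtain ⟨e1, e2⟩ := hσ1 p
    obtain ⟨f1, f2⟩ := hσ1 (σ p)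
    refine Prod.ext ?_ ?_ <;> split_ifs at e1 e2 f1 f2 <;> omega
  · intro p hp
    obtain ⟨h1, h2⟩ := (hmemT p).1 hp
    obtain ⟨e1, e2⟩ := hσ1 p
    obtain ⟨f1, f2⟩ := hσ1 (σ p)
    refine Prod.ext ?_ ?_ <;> split_ifs at e1 e2 f1 f2 <;> omega
  · intro p hp
    obtain ⟨h1, h2⟩ := (hmemT p).1 hp
    obtain ⟨e1, e2⟩ := hσ1 p
    have hAσ : A (σ p) = D p := by
      simp only [hA, hD]
      split_ifs at e1 e2 ⊢ <;> omega
    have hDσ : D (σ p) = A p := by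
      simp only [hA, hD]
      rw [e1, e2]
      split_ifs <;> omega
    rw [hAσ, hDσ, mul_comm]
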